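/- arXiv:0912.3381 — 5 statements merged into one kernel-verified Lean document; each statement's English description precedes it below -/
import Mathlib

section
/- Let (X, 𝒳, μ) be a probability space, k ≥ 1 an integer, and 𝒳₁, 𝒳₂, …, 𝒳ₖ sub-σ-algebras of 𝒳. Then for every bounded non-negative measurable function f on X, ∫ f · ∏_{i=1}^{k} E(f | 𝒳ᵢ) dμ ≥ (∫ f dμ)^{k+1}. -/
/-!
For `F ≥ ε > 0` and sub-σ-algebras `𝒳₁, …, 𝒳ₙ` write `I = ∫ F` and `gᵢ = E(F | 𝒳ᵢ)`. Since
`log gᵢ` is `𝒳ᵢ`-measurable, `∫ F log gᵢ = ∫ gᵢ log gᵢ ≥ I log I` by Jensen's inequality for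
`x log x`. The tangent line of `exp` at `n log I` gives pointwise
`F ∏ gᵢ ≥ Iⁿ (F + ∑ᵢ F (log gᵢ - log I))`, and integrating yields `∫ F ∏ gᵢ ≥ Iⁿ⁺¹`. A general
bounded `f ≥ 0` is handled by applying this to `f + t` and letting `t → 0⁺` by dominated
convergence.
-/

open MeasureTheory Real Filter Topology

theorem pow_card_mul_add_sum_log_sub_le_mul_prod {ι : Type*} (s : Finset ι) {a c : ℝ} {b : ι → ℝ}
    (ha : 0 ≤ a) (hc : 0 < c) (hb : ∀ i ∈ s, 0 < b i) :
    c ^ s.card * (a + ∑ i ∈ s, a * (log (b i) - log c)) ≤ a * ∏ i ∈ s, b i := by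
  have hprod : c ^ s.card * exp (∑ i ∈ s, (log (b i) - log c)) = ∏ i ∈ s, b i := by
    rw [exp_sum, ← Finset.prod_const, ← Finset.prod_mul_distrib]
    refine Finset.prod_congr rfl fun i hi => ?_
    rw [exp_sub, exp_log hc, exp_log (hb i hi)]
    field_simp
  calc c ^ s.card * (a + ∑ i ∈ s, a * (log (b i) - log c))
      = a * (c ^ s.card * (∑ i ∈ s, (log (b i) - log c) + 1)) := by
        rw [← Finset.mul_sum]; ring
    _ ≤ a * (c ^ s.card * exp (∑ i ∈ s, (log (b i) - log c))) := by
        gcongr; exact add_one_le_exp _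
    _ = a * ∏ i ∈ s, b i := by rw [hprod]

theorem norm_mul_prod_le_pow_card_add_one {ι : Type*} (s : Finset ι) {a C : ℝ} {b : ι → ℝ}
    (ha : ‖a‖ ≤ C) (hb : ∀ i ∈ s, ‖b i‖ ≤ C) : ‖a * ∏ i ∈ s, b i‖ ≤ C ^ (s.card + 1) := by
  rw [norm_mul, norm_prod, pow_succ']
  refine mul_le_mul ha ?_ (Finset.prod_nonneg fun i _ => norm_nonneg _) ((norm_nonneg a).trans ha)
  exact (Finset.prod_le_prod (fun i _ => norm_nonneg _) hb).trans_eq (Finset.prod_const C)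

theorem abs_log_le_of_mem_Icc {ε C x : ℝ} (hε : 0 < ε) (hx : x ∈ Set.Icc ε C) :
    |log x| ≤ max |log ε| |log C| :=
  abs_le_max_abs_abs (log_le_log hε hx.1) (log_le_log (hε.trans_le hx.1) hx.2)

section CondExp

variable {X : Type*} {mX : MeasurableSpace X} {μ : Measure X}

theorem ae_condExp_mem_Icc [IsFiniteMeasure μ] {m : MeasurableSpace X} (hm : m ≤ mX) {F : X → ℝ}
    (hF : Integrable F μ) {a b : ℝ} (hF_mem : ∀ᵐ x ∂μ, F x ∈ Set.Icc a b) :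
    ∀ᵐ x ∂μ, μ[F|m] x ∈ Set.Icc a b := by
  have hlow := condExp_mono (m := m) (integrable_const a) hF (hF_mem.mono fun x hx => hx.1)
  have hup := condExp_mono (m := m) hF (integrable_const b) (hF_mem.mono fun x hx => hx.2)
  rw [condExp_const hm] at hlow hup
  filter_upwards [hlow, hup] with x h1 h2 using ⟨h1, h2⟩

theorem condExp_add_const [IsFiniteMeasure μ] {m : MeasurableSpace X} (hm : m ≤ mX) {F : X → ℝ}
    (hF : Integrable F μ) (c : ℝ) : μ[fun x => F x + c|m] =ᵐ[μ] fun x => μ[F|m] x + c := by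
  have h := condExp_add hF (integrable_const c) m
  rwa [condExp_const hm] at h

theorem integral_mul_eq_integral_condExp_mul [IsFiniteMeasure μ] {m : MeasurableSpace X}
    (hm : m ≤ mX) {F h : X → ℝ} (hF : Integrable F μ) (hh : StronglyMeasurable[m] h) {c : ℝ}
    (hc : ∀ᵐ x ∂μ, ‖h x‖ ≤ c) : ∫ x, F x * h x ∂μ = ∫ x, μ[F|m] x * h x ∂μ := by
  calc ∫ x, F x * h x ∂μ = ∫ x, (h * F) x ∂μ := by simp only [Pi.mul_apply, mul_comm]
    _ = ∫ x, μ[h * F|m] x ∂μ := (integral_condExp hm).symm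
    _ = ∫ x, μ[F|m] x * h x ∂μ := integral_congr_ae <| by
        filter_upwards [condExp_stronglyMeasurable_mul_of_bound hm hh hF c hc] with x hx
        rw [hx, Pi.mul_apply, mul_comm]

theorem mul_log_integral_le_integral_mul_log_condExp [IsProbabilityMeasure μ]
    {m : MeasurableSpace X} (hm : m ≤ mX) {F : X → ℝ} (hF : Integrable F μ) {ε C : ℝ}
    (hε : 0 < ε) (hF_mem : ∀ᵐ x ∂μ, F x ∈ Set.Icc ε C) :
    (∫ x, F x ∂μ) * log (∫ x, F x ∂μ) ≤ ∫ x, F x * log (μ[F|m] x) ∂μ := by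
  have hg_mem := ae_condExp_mem_Icc hm hF hF_mem
  have hlog_meas : StronglyMeasurable[m] fun x => log (μ[F|m] x) :=
    stronglyMeasurable_condExp.measurable.log.stronglyMeasurable
  have hlog_bdd : ∀ᵐ x ∂μ, ‖log (μ[F|m] x)‖ ≤ max |log ε| |log C| :=
    hg_mem.mono fun x hx => abs_log_le_of_mem_Icc hε hx
  rw [integral_mul_eq_integral_condExp_mul hm hF hlog_meas hlog_bdd, ← integral_condExp hm]
  exact convexOn_mul_log.map_integral_le continuous_mul_log.continuousOn isClosed_Ici
    (hg_mem.mono fun x hx => hε.le.trans hx.1) integrable_condExp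
    (integrable_condExp.mul_bdd (hlog_meas.mono hm).aestronglyMeasurable hlog_bdd)

theorem tendsto_integral_add_mul_prod_add [IsFiniteMeasure μ] {ι : Type*} [Fintype ι]
    {f : X → ℝ} {g : ι → X → ℝ} (hf : AEStronglyMeasurable f μ)
    (hg : ∀ i, AEStronglyMeasurable (g i) μ) {C : ℝ} (hf_bdd : ∀ᵐ x ∂μ, ‖f x‖ ≤ C)
    (hg_bdd : ∀ i, ∀ᵐ x ∂μ, ‖g i x‖ ≤ C) :
    Tendsto (fun t : ℝ => ∫ x, (f x + t) * ∏ i, (g i x + t) ∂μ) (𝓝 0)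
      (𝓝 (∫ x, f x * ∏ i, g i x ∂μ)) := by
  refine tendsto_integral_filter_of_dominated_convergence
    (fun _ => (C + 1) ^ ((Finset.univ : Finset ι).card + 1)) ?_ ?_ (integrable_const _) ?_
  · exact Eventually.of_forall fun t => (hf.add aestronglyMeasurable_const).mul
      (Finset.aestronglyMeasurable_fun_prod _ fun i _ => (hg i).add aestronglyMeasurable_const)
  · filter_upwards [Metric.closedBall_mem_nhds (0 : ℝ) one_pos] with t ht
    rw [mem_closedBall_zero_iff] at ht
    filter_upwards [hf_bdd, ae_all_iff.2 hg_bdd] with x hfx hgx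
    exact norm_mul_prod_le_pow_card_add_one _ (norm_add_le_of_le hfx ht)
      fun i _ => norm_add_le_of_le (hgx i) ht
  · exact ae_of_all _ fun x =>
      (by fun_prop : Continuous fun t : ℝ => (f x + t) * ∏ i, (g i x + t)).tendsto' 0 _ (by simp)

variable [IsProbabilityMeasure μ] {ι : Type*} [Fintype ι] {m : ι → MeasurableSpace X}

theorem pow_integral_le_integral_mul_prod_condExp_of_pos (hm : ∀ i, m i ≤ mX) {F : X → ℝ}
    (hF : AEMeasurable F μ) {ε C : ℝ} (hε : 0 < ε) (hF_mem : ∀ᵐ x ∂μ, F x ∈ Set.Icc ε C) :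
    (∫ x, F x ∂μ) ^ (Fintype.card ι + 1) ≤ ∫ x, F x * ∏ i, μ[F|m i] x ∂μ := by
  set I := ∫ x, F x ∂μ
  set n := Fintype.card ι
  have hFi : Integrable F μ := .of_mem_Icc ε C hF hF_mem
  have hI : 0 < I := hε.trans_le <| by
    simpa using integral_mono_ae (integrable_const ε) hFi (hF_mem.mono fun x hx => hx.1)
  have hg_mem i : ∀ᵐ x ∂μ, μ[F|m i] x ∈ Set.Icc ε C := ae_condExp_mem_Icc (hm i) hFi hF_mem
  have hFlog_int i : Integrable (fun x => F x * log (μ[F|m i] x)) μ :=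
    hFi.mul_bdd (stronglyMeasurable_condExp.mono (hm i)).measurable.log.aestronglyMeasurable
      ((hg_mem i).mono fun x hx => abs_log_le_of_mem_Icc hε hx)
  have hterm_int i : Integrable (fun x => F x * (log (μ[F|m i] x) - log I)) μ := by
    simp_rw [mul_sub]; exact (hFlog_int i).sub (hFi.mul_const _)
  have hterm_nonneg i : 0 ≤ ∫ x, F x * (log (μ[F|m i] x) - log I) ∂μ := by
    simp_rw [mul_sub]
    rw [integral_sub (hFlog_int i) (hFi.mul_const _), integral_mul_const, sub_nonneg]
    exact mul_log_integral_le_integral_mul_log_condExp (hm i) hFi hε hF_mem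
  have hprod_int : Integrable (fun x => F x * ∏ i, μ[F|m i] x) μ := by
    refine .of_bound (hF.mul (Finset.aemeasurable_fun_prod _ fun i _ =>
      (stronglyMeasurable_condExp.mono (hm i)).measurable.aemeasurable)).aestronglyMeasurable
      (C ^ ((Finset.univ : Finset ι).card + 1)) ?_
    filter_upwards [hF_mem, ae_all_iff.2 hg_mem] with x hFx hgx
    exact norm_mul_prod_le_pow_card_add_one _ ((abs_of_pos (hε.trans_le hFx.1)).trans_le hFx.2)
      fun i _ => (abs_of_pos (hε.trans_le (hgx i).1)).trans_le (hgx i).2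
  have hpointwise : ∀ᵐ x ∂μ, I ^ n * (F x + ∑ i, F x * (log (μ[F|m i] x) - log I)) ≤
      F x * ∏ i, μ[F|m i] x := by
    filter_upwards [hF_mem, ae_all_iff.2 hg_mem] with x hFx hgx
    exact pow_card_mul_add_sum_log_sub_le_mul_prod Finset.univ (hε.le.trans hFx.1) hI
      fun i _ => hε.trans_le (hgx i).1
  have hsum_int := integrable_finsetSum Finset.univ fun i _ => hterm_int i
  calc I ^ (n + 1) = I ^ n * I := pow_succ _ _
    _ ≤ I ^ n * (I + ∑ i, ∫ x, F x * (log (μ[F|m i] x) - log I) ∂μ) := by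
        gcongr; exact le_add_of_nonneg_right (Finset.sum_nonneg fun i _ => hterm_nonneg i)
    _ = ∫ x, I ^ n * (F x + ∑ i, F x * (log (μ[F|m i] x) - log I)) ∂μ := by
        rw [integral_const_mul, integral_add hFi hsum_int,
          integral_finsetSum _ fun i _ => hterm_int i]
    _ ≤ ∫ x, F x * ∏ i, μ[F|m i] x ∂μ :=
        integral_mono_ae ((hFi.add hsum_int).const_mul _) hprod_int hpointwise

theorem pow_integral_le_integral_mul_prod_condExp (hm : ∀ i, m i ≤ mX) {F : X → ℝ}
    (hF : AEMeasurable F μ) {C : ℝ} (hF_mem : ∀ᵐ x ∂μ, F x ∈ Set.Icc 0 C) :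
    (∫ x, F x ∂μ) ^ (Fintype.card ι + 1) ≤ ∫ x, F x * ∏ i, μ[F|m i] x ∂μ := by
  have hFi : Integrable F μ := .of_mem_Icc 0 C hF hF_mem
  have hg_mem i : ∀ᵐ x ∂μ, μ[F|m i] x ∈ Set.Icc 0 C := ae_condExp_mem_Icc (hm i) hFi hF_mem
  have hshifted : ∀ t > 0, (∫ x, F x ∂μ + t) ^ (Fintype.card ι + 1) ≤
      ∫ x, (F x + t) * ∏ i, (μ[F|m i] x + t) ∂μ := by
    intro t ht
    have key := pow_integral_le_integral_mul_prod_condExp_of_pos (m := m) hm (hF.add_const t) ht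
      (hF_mem.mono fun x hx => ⟨le_add_of_nonneg_left hx.1, (add_le_add_iff_right t).2 hx.2⟩)
    rw [integral_add hFi (integrable_const t), integral_const, probReal_univ, one_smul] at key
    refine key.trans_eq (integral_congr_ae ?_)
    filter_upwards [ae_all_iff.2 fun i => condExp_add_const (hm i) hFi t] with x hx
    simp only [hx]
  have hlim := tendsto_integral_add_mul_prod_add hF.aestronglyMeasurable
    (fun i => (stronglyMeasurable_condExp (m := m i)).aestronglyMeasurable.mono (hm i))
    (hF_mem.mono fun x hx => (abs_of_nonneg hx.1).trans_le hx.2)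
    fun i => (hg_mem i).mono fun x hx => (abs_of_nonneg hx.1).trans_le hx.2
  refine le_of_tendsto_of_tendsto ?_ (hlim.mono_left nhdsWithin_le_nhds)
    (eventually_nhdsWithin_of_forall (s := Set.Ioi 0) hshifted)
  exact ((by fun_prop : Continuous fun t : ℝ => (∫ x, F x ∂μ + t) ^ (Fintype.card ι + 1)).tendsto' 0 _
    (by simp)).mono_left nhdsWithin_le_nhds

end CondExp

theorem condexp_product_inequality_general
    {X : Type*} [mX : MeasurableSpace X] (μ : Measure X) [IsProbabilityMeasure μ]
    (k : ℕ)
    (m : Fin k → MeasurableSpace X) (hm : ∀ i, m i ≤ mX)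
    (f : X → ℝ) (hf : Measurable f) (hf0 : ∀ x, 0 ≤ f x)
    (C : ℝ) (hfC : ∀ x, f x ≤ C) :
    ∫ x, f x * ∏ i, (μ[f|m i]) x ∂μ ≥ (∫ x, f x ∂μ) ^ (k + 1) := by
  simpa only [Fintype.card_fin] using pow_integral_le_integral_mul_prod_condExp hm
    hf.aemeasurable (ae_of_all μ fun x => ⟨hf0 x, hfC x⟩)

theorem condexp_product_inequality
    {X : Type*} [mX : MeasurableSpace X] (μ : Measure X) [IsProbabilityMeasure μ]
    (k : ℕ) (hk : 1 ≤ k)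
    (m : Fin k → MeasurableSpace X) (hm : ∀ i, m i ≤ mX)
    (f : X → ℝ) (hf : Measurable f) (hf0 : ∀ x, 0 ≤ f x)
    (C : ℝ) (hfC : ∀ x, f x ≤ C) :
    ∫ x, f x * ∏ i, (μ[f|m i]) x ∂μ ≥ (∫ x, f x ∂μ) ^ (k + 1) :=
  condexp_product_inequality_general (mX := mX) μ k m hm f hf hf0 C hfC
end

section
/- Let (X, μ, T₁, T₂) be a system on a standard Borel space, let 𝒜 = ℐ(T₁) ∩ ℐ(T₂) and 𝒲 = ℐ(T₁) ∨ ℐ(T₂), and suppose x ↦ μₓ is an ergodic decomposition of μ under T₁ and T₂. Let f be a bounded measurable function on X and let f̃ be a 𝒲-measurable function with f̃ = E_μ(f | 𝒲) μ-almost everywhere. Then for μ-almost every x, one has E_{μₓ}(f | 𝒲) = f̃ μₓ-almost everywhere. -/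
/-!
For a fixed `𝒲`-measurable set `S`, `E_μ(1_S (f - f̃) | 𝒜) = E_μ(1_S E_μ(f - f̃ | 𝒲) | 𝒜) = 0`,
so the decomposition gives `∫_S (f - f̃) dμₓ = 0` for `μ`-a.e. `x`; once this holds for all
`S ∈ 𝒲` at once, `f̃` is `E_{μₓ}(f | 𝒲)`. Since `𝒲` need not be countably generated, the
exceptional null sets cannot simply be collected over all `S`. Instead, one countable family of
`T`-invariant sets generates `ℐ(T)` modulo the null sets of every `T`-invariant probability measure
simultaneously: the sets of points whose orbit visits `E` with upper frequency `> 1/2`, for `E` in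
a countable generating algebra. An invariant set `A` is recovered from approximations `E_k` of `A`
as the `liminf` of these sets, by the maximal ergodic inequality and Borel–Cantelli.
-/

open MeasureTheory

/-- The σ-algebra `ℐ(T)` of `T`-invariant measurable sets. -/
def invSigma {X : Type*} [m : MeasurableSpace X] (T : X → X) : MeasurableSpace X where
  MeasurableSet' s := MeasurableSet s ∧ T ⁻¹' s = s
  measurableSet_empty := ⟨MeasurableSet.empty, rfl⟩
  measurableSet_compl s hs := ⟨hs.1.compl, by rw [Set.preimage_compl, hs.2]⟩
  measurableSet_iUnion f hf :=
    ⟨MeasurableSet.iUnion fun i => (hf i).1, by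
      rw [Set.preimage_iUnion]
      exact Set.iUnion_congr fun i => (hf i).2⟩

open Filter Set MeasurableSpace
open scoped ENNReal NNReal symmDiff Topology

theorem ENNReal.limsup_add_le_atTop (u v : ℕ → ℝ≥0∞) :
    limsup (u + v) atTop ≤ limsup u atTop + limsup v atTop := by
  simp only [limsup_eq_iInf_iSup_of_nat]
  rw [ENNReal.iInf_add_iInf fun i j => ⟨max i j, add_le_add
    (biSup_mono fun k hk => (le_max_left i j).trans hk)
    (biSup_mono fun k hk => (le_max_right i j).trans hk)⟩]
  exact iInf_mono fun n => iSup₂_le fun i hi =>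
    add_le_add (le_iSup₂_of_le i hi le_rfl) (le_iSup₂_of_le i hi le_rfl)

theorem ENNReal.limsup_le_limsup_of_le_add {u v w : ℕ → ℝ≥0∞}
    (h : ∀ n, u n ≤ v n + w n) (hw : Tendsto w atTop (𝓝 0)) :
    limsup u atTop ≤ limsup v atTop :=
  calc limsup u atTop ≤ limsup (v + w) atTop := limsup_le_limsup (.of_forall h)
    _ ≤ limsup v atTop + limsup w atTop := ENNReal.limsup_add_le_atTop v w
    _ = limsup v atTop := by rw [hw.limsup_eq, add_zero]

section BirkhoffSum

variable {X : Type*} {T : X → X}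

theorem Measurable.birkhoffSum [MeasurableSpace X] {M : Type*} [AddCommMonoid M]
    [MeasurableSpace M] [MeasurableAdd₂ M] {g : X → M} (hg : Measurable g) (hT : Measurable T)
    (n : ℕ) : Measurable (birkhoffSum T g n) :=
  Finset.measurable_fun_sum _ fun k _ => hg.comp (hT.iterate k)

theorem ENNReal.ofReal_birkhoffSum {g : X → ℝ} (hg : 0 ≤ g) (n : ℕ) (y : X) :
    ENNReal.ofReal (birkhoffSum T g n y) = birkhoffSum T (ENNReal.ofReal ∘ g) n y :=
  ENNReal.ofReal_sum_of_nonneg fun _ _ => hg _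

theorem birkhoffSum_mono {M : Type*} [AddCommMonoid M] [PartialOrder M] [IsOrderedAddMonoid M]
    {g g' : X → M} (h : g ≤ g') (n : ℕ) (y : X) :
    birkhoffSum T g n y ≤ birkhoffSum T g' n y :=
  Finset.sum_le_sum fun _ _ => h _

theorem partialSups_birkhoffSum_le_max (h : X → ℝ) (N : ℕ) (y : X) :
    partialSups (birkhoffSum T h) N y ≤
      max 0 (h y + partialSups (birkhoffSum T h) N (T y)) := by
  rw [Pi.partialSups_apply]
  refine partialSups_le _ _ _ fun n hn => ?_
  cases n with
  | zero => simp [birkhoffSum_zero]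
  | succ n =>
    rw [birkhoffSum_succ']
    exact le_max_of_le_right (add_le_add le_rfl
      (le_partialSups_of_le (birkhoffSum T h) (n.le_succ.trans hn) (T y)))

variable {g : X → ℝ≥0∞}

theorem birkhoffSum_apply_le_add_one (hg : g ≤ 1) (n : ℕ) (y : X) :
    birkhoffSum T g n (T y) ≤ birkhoffSum T g n y + 1 :=
  calc birkhoffSum T g n (T y) ≤ g y + birkhoffSum T g n (T y) := le_add_self
    _ = birkhoffSum T g n y + g (T^[n] y) := by rw [← birkhoffSum_succ', birkhoffSum_succ]
    _ ≤ birkhoffSum T g n y + 1 := by gcongr; exact hg _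

theorem birkhoffSum_le_apply_add_one (hg : g ≤ 1) (n : ℕ) (y : X) :
    birkhoffSum T g n y ≤ birkhoffSum T g n (T y) + 1 :=
  calc birkhoffSum T g n y ≤ birkhoffSum T g n y + g (T^[n] y) := le_self_add
    _ = birkhoffSum T g n (T y) + g y := by
      rw [← birkhoffSum_succ, birkhoffSum_succ', add_comm]
    _ ≤ birkhoffSum T g n (T y) + 1 := by gcongr; exact hg _

end BirkhoffSum

section UpperVisitFreq

variable {X : Type*} (T : X → X)

noncomputable def upperVisitFreq (D : Set X) (y : X) : ℝ≥0∞ :=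
  limsup (fun n => birkhoffSum T (D.indicator 1) n y / n) atTop

variable {T}

theorem upperVisitFreq_apply_self (D : Set X) (y : X) :
    upperVisitFreq T D (T y) = upperVisitFreq T D y := by
  have hD : D.indicator (1 : X → ℝ≥0∞) ≤ 1 := indicator_le_self' fun _ _ => bot_le
  have hw : Tendsto (fun n : ℕ => 1 / (n : ℝ≥0∞)) atTop (𝓝 0) := by
    simpa only [one_div] using ENNReal.tendsto_inv_nat_nhds_zero
  refine le_antisymm (ENNReal.limsup_le_limsup_of_le_add (fun n => ?_) hw)
    (ENNReal.limsup_le_limsup_of_le_add (fun n => ?_) hw) <;> rw [← ENNReal.add_div] <;>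
    gcongr
  exacts [birkhoffSum_apply_le_add_one hD n y, birkhoffSum_le_apply_add_one hD n y]

theorem upperVisitFreq_of_preimage_eq {A : Set X} (hA : T ⁻¹' A = A) :
    upperVisitFreq T A = A.indicator 1 := by
  have hcomp : A.indicator (1 : X → ℝ≥0∞) ∘ T = A.indicator 1 := by
    funext y
    rw [Function.comp_apply, ← indicator_comp_right, hA]
    rfl
  funext y
  refine (limsup_congr ?_).trans (limsup_const _)
  filter_upwards [eventually_ne_atTop 0] with n hn
  rw [birkhoffSum_of_comp_eq hcomp, Pi.smul_apply, nsmul_eq_mul, mul_comm,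
    ENNReal.mul_div_cancel_right (Nat.cast_ne_zero.2 hn) (ENNReal.natCast_ne_top n)]

theorem upperVisitFreq_le_add_symmDiff (D E : Set X) (y : X) :
    upperVisitFreq T D y ≤ upperVisitFreq T E y + upperVisitFreq T (D ∆ E) y := by
  refine (limsup_le_limsup (.of_forall fun n => ?_)).trans (ENNReal.limsup_add_le_atTop _ _)
  rw [Pi.add_apply, ENNReal.div_add_div_same, ← birkhoffSum_add']
  refine ENNReal.div_le_div_right (birkhoffSum_mono (fun z => ?_) n y) _
  by_cases hD : z ∈ D <;> by_cases hE : z ∈ E <;> simp [hD, hE, mem_symmDiff]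

theorem measurable_upperVisitFreq [MeasurableSpace X] (hT : Measurable T) {D : Set X}
    (hD : MeasurableSet D) : Measurable (upperVisitFreq T D) :=
  .limsup fun n => (Measurable.birkhoffSum (measurable_one.indicator hD) hT n).div_const _

theorem exists_lt_birkhoffSum_of_lt_upperVisitFreq {D : Set X} {y : X} {c : ℝ≥0}
    (h : (c : ℝ≥0∞) < upperVisitFreq T D y) :
    ∃ n : ℕ, (c : ℝ) * n < birkhoffSum T (D.indicator 1) n y := by
  obtain ⟨n, hn, hn0⟩ := ((frequently_lt_of_lt_limsup (by isBoundedDefault) h).and_eventually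
    (eventually_ne_atTop 0)).exists
  refine ⟨n, ?_⟩
  have hind : D.indicator (1 : X → ℝ≥0∞) = ENNReal.ofReal ∘ D.indicator 1 := by
    ext z
    by_cases hz : z ∈ D <;> simp [hz]
  rw [ENNReal.lt_div_iff_mul_lt (.inl (Nat.cast_ne_zero.2 hn0)) (.inl (ENNReal.natCast_ne_top n)),
    hind,
    ← ENNReal.ofReal_birkhoffSum (g := D.indicator 1) (indicator_nonneg fun _ _ => zero_le_one),
    ← ENNReal.ofReal_coe_nnreal, ← ENNReal.ofReal_natCast, ← ENNReal.ofReal_mul c.coe_nonneg]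
    at hn
  exact (ENNReal.ofReal_lt_ofReal_iff'.1 hn).1

theorem symmDiff_liminf_subset_limsup_upperVisitFreq {A : Set X} (hA : T ⁻¹' A = A)
    (E : ℕ → Set X) {c : ℝ≥0∞} (hc : c < 2⁻¹) :
    A ∆ liminf (fun k => {y | 2⁻¹ < upperVisitFreq T (E k) y}) atTop ⊆
      limsup (fun k => {y | c < upperVisitFreq T (A ∆ E k) y}) atTop := by
  have hdA := upperVisitFreq_of_preimage_eq hA
  intro y hy
  rw [mem_limsup_iff_frequently_mem]
  rcases hy with ⟨hyA, hyB⟩ | ⟨hyB, hyA⟩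
  · rw [mem_liminf_iff_eventually_mem, not_eventually] at hyB
    refine hyB.mono fun k hk => hc.trans_le ?_
    have h1 := upperVisitFreq_le_add_symmDiff (T := T) A (E k) y
    rw [hdA, indicator_of_mem hyA, Pi.one_apply, ← ENNReal.inv_two_add_inv_two] at h1
    exact ENNReal.le_of_add_le_add_left (ENNReal.inv_ne_top.2 two_ne_zero)
      (h1.trans (add_le_add (not_lt.1 hk) le_rfl))
  · rw [mem_liminf_iff_eventually_mem] at hyB
    refine (hyB.mono fun k hk => hc.trans (hk.trans_le ?_)).frequently
    have h1 := upperVisitFreq_le_add_symmDiff (T := T) (E k) A y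
    rwa [hdA, indicator_of_notMem hyA, zero_add, symmDiff_comm] at h1

end UpperVisitFreq

section MaximalErgodic

variable {X : Type*} [MeasurableSpace X] {ν : Measure X}

theorem Measurable.partialSups {β : Type*} [MeasurableSpace β] [SemilatticeSup β]
    [MeasurableSup₂ β] {f : ℕ → X → β} (hf : ∀ n, Measurable (f n)) (N : ℕ) :
    Measurable (partialSups f N) := by
  rw [partialSups_apply]
  exact Finset.measurable_sup' _ fun n _ => hf n

theorem MeasureTheory.Integrable.partialSups {f : ℕ → X → ℝ} (hf : ∀ n, Integrable (f n) ν)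
    (N : ℕ) : Integrable (partialSups f N) ν := by
  rw [partialSups_apply]
  exact Finset.sup'_induction (p := fun g => Integrable g ν) _ _
    (fun _ h₁ _ h₂ => h₁.sup h₂) fun n _ => hf n

theorem Measurable.integrable_of_abs_le [IsFiniteMeasure ν] {f : X → ℝ} (hf : Measurable f)
    {C : ℝ} (hC : ∀ y, |f y| ≤ C) : Integrable f ν :=
  .of_bound hf.aestronglyMeasurable C (.of_forall hC)

namespace MeasureTheory.MeasurePreserving

variable {T : X → X} {h : X → ℝ}

theorem integrable_birkhoffSum (hT : MeasurePreserving T ν ν) (hi : Integrable h ν) (n : ℕ) :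
    Integrable (birkhoffSum T h n) ν :=
  integrable_finsetSum _ fun k _ => (hT.iterate k).integrable_comp_of_integrable hi

theorem setIntegral_partialSups_birkhoffSum_pos_nonneg (hT : MeasurePreserving T ν ν)
    (hm : Measurable h) (hi : Integrable h ν) (N : ℕ) :
    0 ≤ ∫ y in {y | 0 < partialSups (birkhoffSum T h) N y}, h y ∂ν := by
  set M := partialSups (birkhoffSum T h) N
  set U := {y | 0 < M y}
  have hM_meas : Measurable M := .partialSups (fun n => hm.birkhoffSum hT.measurable n) N
  have hM_int : Integrable M ν := .partialSups (hT.integrable_birkhoffSum hi) N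
  have hMT_int : Integrable (M ∘ T) ν := hT.integrable_comp_of_integrable hM_int
  have hM_nonneg (y : X) : 0 ≤ M y :=
    (le_partialSups_of_le (birkhoffSum T h) N.zero_le y).trans_eq' (birkhoffSum_zero T h y).symm
  have hMT : ∫ y, M (T y) ∂ν = ∫ y, M y ∂ν := by
    rw [← integral_map hT.aemeasurable hM_meas.aestronglyMeasurable, hT.map_eq]
  calc (0 : ℝ) = ∫ y, M y ∂ν - ∫ y, M (T y) ∂ν := by rw [hMT, sub_self]
    _ ≤ ∫ y in U, M y ∂ν - ∫ y in U, M (T y) ∂ν := by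
      rw [setIntegral_eq_integral_of_forall_compl_eq_zero (s := U) fun y hy =>
        le_antisymm (not_lt.1 hy) (hM_nonneg y)]
      exact sub_le_sub_left
        (setIntegral_le_integral hMT_int (.of_forall fun y => hM_nonneg (T y))) _
    _ = ∫ y in U, (M y - M (T y)) ∂ν :=
      (integral_sub hM_int.integrableOn hMT_int.integrableOn).symm
    _ ≤ ∫ y in U, h y ∂ν := by
      refine setIntegral_mono_on (hM_int.sub hMT_int).integrableOn hi.integrableOn
        (measurableSet_lt measurable_const hM_meas) fun y hy => ?_
      have hmax : M y ≤ h y + M (T y) :=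
        (le_max_iff.1 (partialSups_birkhoffSum_le_max h N y)).resolve_left (not_le.2 hy)
      linarith

/-- The maximal ergodic theorem, in Garsia's form. -/
theorem setIntegral_exists_birkhoffSum_pos_nonneg (hT : MeasurePreserving T ν ν)
    (hm : Measurable h) (hi : Integrable h ν) :
    0 ≤ ∫ y in {y | ∃ n, 0 < birkhoffSum T h n y}, h y ∂ν := by
  have hU : {y | ∃ n, 0 < birkhoffSum T h n y} =
      ⋃ N, {y | 0 < partialSups (birkhoffSum T h) N y} := by
    ext y
    simp only [mem_iUnion, mem_ofPred_eq]
    refine ⟨fun ⟨n, hn⟩ => ⟨n, hn.trans_le (le_partialSups (birkhoffSum T h) n y)⟩,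
      fun ⟨N, hN⟩ => ?_⟩
    by_contra! hle
    rw [Pi.partialSups_apply] at hN
    exact hN.not_ge (partialSups_le _ _ _ fun n _ => hle n)
  rw [hU]
  refine ge_of_tendsto (tendsto_setIntegral_of_monotone (fun N => measurableSet_lt
      measurable_const (.partialSups (fun n => hm.birkhoffSum hT.measurable n) N))
    (fun N N' hN => ofPred_subset_ofPred.2 fun y hy =>
      hy.trans_le (Pi.le_def.1 (partialSups_monotone _ hN) y)) hi.integrableOn)
    (.of_forall (hT.setIntegral_partialSups_birkhoffSum_pos_nonneg hm hi))

theorem mul_measureReal_exists_lt_birkhoffSum_le [IsFiniteMeasure ν]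
    (hT : MeasurePreserving T ν ν) {D : Set X} (hD : MeasurableSet D) (c : ℝ) :
    c * ν.real {y | ∃ n : ℕ, c * n < birkhoffSum T (D.indicator 1) n y} ≤ ν.real D := by
  set U := {y | ∃ n : ℕ, c * n < birkhoffSum T (D.indicator 1) n y}
  have hU : U = {y | ∃ n, 0 < birkhoffSum T (D.indicator 1 - fun _ => c) n y} := by
    simp only [U, birkhoffSum_sub, birkhoffSum_of_comp_eq (φ := fun _ : X => c) rfl,
      Pi.smul_apply, nsmul_eq_mul, sub_pos, mul_comm c]
  have hD1 : Integrable (D.indicator 1) ν := (integrable_const (1 : ℝ)).indicator hD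
  have hmain := hT.setIntegral_exists_birkhoffSum_pos_nonneg
    ((measurable_one.indicator hD).sub measurable_const) (hD1.sub (integrable_const c))
  rw [← hU] at hmain
  simp only [Pi.sub_apply] at hmain
  rw [integral_sub hD1.integrableOn (integrable_const c).integrableOn,
    setIntegral_indicator hD] at hmain
  simp only [Pi.one_apply, setIntegral_const, smul_eq_mul, mul_one] at hmain
  linarith [measureReal_mono (μ := ν) (inter_subset_right : U ∩ D ⊆ D)]

theorem mul_measure_lt_upperVisitFreq_le [IsFiniteMeasure ν] (hT : MeasurePreserving T ν ν)
    {D : Set X} (hD : MeasurableSet D) (c : ℝ≥0) :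
    c * ν {y | (c : ℝ≥0∞) < upperVisitFreq T D y} ≤ ν D :=
  calc (c : ℝ≥0∞) * ν {y | (c : ℝ≥0∞) < upperVisitFreq T D y}
      ≤ c * ν {y | ∃ n : ℕ, (c : ℝ) * n < birkhoffSum T (D.indicator 1) n y} := by
        gcongr
        exact exists_lt_birkhoffSum_of_lt_upperVisitFreq
    _ = ENNReal.ofReal
          (c * ν.real {y | ∃ n : ℕ, (c : ℝ) * n < birkhoffSum T (D.indicator 1) n y}) := by
        rw [ENNReal.ofReal_mul c.coe_nonneg, ofReal_measureReal, ENNReal.ofReal_coe_nnreal]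
    _ ≤ ENNReal.ofReal (ν.real D) :=
        ENNReal.ofReal_le_ofReal (hT.mul_measureReal_exists_lt_birkhoffSum_le hD c)
    _ = ν D := ofReal_measureReal

end MeasureTheory.MeasurePreserving

end MaximalErgodic

section Approximation

variable {X : Type*}

def aeClosure [MeasurableSpace X] (ν : Measure X) (Q : MeasurableSpace X) :
    MeasurableSpace X where
  MeasurableSet' S := ∃ S', MeasurableSet[Q] S' ∧ S =ᵐ[ν] S'
  measurableSet_empty := ⟨∅, @MeasurableSet.empty _ Q, .rfl⟩
  measurableSet_compl _ := fun ⟨S', hS', h⟩ => ⟨S'ᶜ, hS'.compl, h.compl⟩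
  measurableSet_iUnion _ h := by
    choose S' hS' h using h
    exact ⟨⋃ i, S' i, .iUnion hS', .countable_iUnion h⟩

theorem aeClosure_mono {Q Q' : MeasurableSpace X} [MeasurableSpace X] (ν : Measure X)
    (h : Q ≤ Q') : aeClosure ν Q ≤ aeClosure ν Q' :=
  fun _ ⟨S', hS', hSS'⟩ => ⟨S', h _ hS', hSS'⟩

variable [MeasurableSpace X]

def frequentVisitSets (T : X → X) (𝔄 : Set (Set X)) : Set (Set X) :=
  (fun E => {y | 2⁻¹ < upperVisitFreq T E y}) '' 𝔄

theorem generateFrom_frequentVisitSets_le_invSigma {T : X → X} (hT : Measurable T)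
    {𝔄 : Set (Set X)} (h𝔄 : ∀ E ∈ 𝔄, MeasurableSet E) :
    generateFrom (frequentVisitSets T 𝔄) ≤ invSigma T := by
  refine generateFrom_le ?_
  rintro _ ⟨E, hE, rfl⟩
  exact ⟨measurableSet_lt measurable_const (measurable_upperVisitFreq hT (h𝔄 E hE)),
    by ext y; simp only [mem_preimage, mem_ofPred_eq, upperVisitFreq_apply_self]⟩

theorem invSigma_le_aeClosure {ν : Measure X} [IsFiniteMeasure ν] {T : X → X}
    (hT : MeasurePreserving T ν ν) {𝔄 : Set (Set X)} (h𝔄 : ν.MeasureDense 𝔄) :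
    invSigma T ≤ aeClosure ν (generateFrom (frequentVisitSets T 𝔄)) := by
  rintro A ⟨hA, hAT⟩
  have happrox (k : ℕ) : ∃ E ∈ 𝔄, ν (A ∆ E) < 2⁻¹ ^ k := by
    obtain ⟨E, hE, hlt⟩ := h𝔄.approx A hA (measure_ne_top ν A) ((2⁻¹ : ℝ) ^ k) (by positivity)
    refine ⟨E, hE, hlt.trans_eq ?_⟩
    rw [ENNReal.ofReal_pow (by norm_num), ENNReal.ofReal_inv_of_pos two_pos, ENNReal.ofReal_ofNat]
  choose E hE𝔄 hEA using happrox
  set bad : ℕ → Set X := fun k => {y | ((3⁻¹ : ℝ≥0) : ℝ≥0∞) < upperVisitFreq T (A ∆ E k) y}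
  have hbad (k : ℕ) : ν (bad k) ≤ 3 * 2⁻¹ ^ k :=
    calc ν (bad k) = 3 * (((3⁻¹ : ℝ≥0) : ℝ≥0∞) * ν (bad k)) := by
          rw [← mul_assoc, ENNReal.coe_inv three_ne_zero, ENNReal.coe_ofNat,
            ENNReal.mul_inv_cancel three_ne_zero ENNReal.ofNat_ne_top, one_mul]
      _ ≤ 3 * ν (A ∆ E k) := by
          gcongr
          exact hT.mul_measure_lt_upperVisitFreq_le (hA.symmDiff (h𝔄.measurable _ (hE𝔄 k))) _
      _ ≤ 3 * 2⁻¹ ^ k := by grw [hEA k]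
  have hBC : ν (limsup bad atTop) = 0 := by
    refine measure_limsup_atTop_eq_zero (ne_top_of_le_ne_top ?_ (ENNReal.tsum_le_tsum hbad))
    rw [ENNReal.tsum_mul_left, ENNReal.tsum_geometric, ENNReal.one_sub_inv_two, inv_inv]
    exact ENNReal.mul_ne_top (by norm_num) (by norm_num)
  have h32 : ((3⁻¹ : ℝ≥0) : ℝ≥0∞) < 2⁻¹ := by
    rw [ENNReal.coe_inv three_ne_zero, ENNReal.coe_ofNat]
    exact ENNReal.inv_lt_inv.2 (by norm_num)
  refine ⟨liminf (fun k => {y | 2⁻¹ < upperVisitFreq T (E k) y}) atTop,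
    @MeasurableSet.measurableSet_liminf _ (generateFrom _) _ fun k =>
      measurableSet_generateFrom (mem_image_of_mem _ (hE𝔄 k)),
    measure_symmDiff_eq_zero_iff.1
      (measure_mono_null (symmDiff_liminf_subset_limsup_upperVisitFreq hAT E h32) hBC)⟩

theorem exists_countable_isSetAlgebra_sup_invSigma_le_aeClosure [CountablyGenerated X]
    {T₁ T₂ : X → X} (hT₁ : Measurable T₁) (hT₂ : Measurable T₂) :
    ∃ P : Set (Set X), P.Countable ∧ IsSetAlgebra P ∧
      generateFrom P ≤ invSigma T₁ ⊔ invSigma T₂ ∧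
      ∀ (ν : Measure X) [IsFiniteMeasure ν], MeasurePreserving T₁ ν ν →
        MeasurePreserving T₂ ν ν → invSigma T₁ ⊔ invSigma T₂ ≤ aeClosure ν (generateFrom P) := by
  set 𝔄 := generateSetAlgebra (countableGeneratingSet X)
  have h𝔄 : ‹MeasurableSpace X› = generateFrom 𝔄 := by
    rw [generateFrom_generateSetAlgebra_eq, generateFrom_countableGeneratingSet]
  have h𝔄m : ∀ E ∈ 𝔄, MeasurableSet E := fun E hE => h𝔄 ▸ measurableSet_generateFrom hE
  have h𝔄c : 𝔄.Countable := countable_generateSetAlgebra countable_countableGeneratingSet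
  refine ⟨generateSetAlgebra (frequentVisitSets T₁ 𝔄 ∪ frequentVisitSets T₂ 𝔄),
    countable_generateSetAlgebra ((h𝔄c.image _).union (h𝔄c.image _)),
    isSetAlgebra_generateSetAlgebra, ?_, fun ν _ hν₁ hν₂ => ?_⟩ <;>
    rw [generateFrom_generateSetAlgebra_eq, ← generateFrom_sup_generateFrom]
  · exact sup_le_sup (generateFrom_frequentVisitSets_le_invSigma hT₁ h𝔄m)
      (generateFrom_frequentVisitSets_le_invSigma hT₂ h𝔄m)
  · have h𝔄ν := Measure.MeasureDense.of_generateFrom_isSetAlgebra_finite ν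
      isSetAlgebra_generateSetAlgebra h𝔄
    exact sup_le ((invSigma_le_aeClosure hν₁ h𝔄ν).trans (aeClosure_mono ν le_sup_left))
      ((invSigma_le_aeClosure hν₂ h𝔄ν).trans (aeClosure_mono ν le_sup_right))

end Approximation

section SetIntegral

variable {X E : Type*} [NormedAddCommGroup E] [NormedSpace ℝ E]

theorem setIntegral_eq_zero_of_measurableSet_generateFrom [mX : MeasurableSpace X]
    {ν : Measure X} {φ : X → E} {P : Set (Set X)} (hP : IsSetAlgebra P)
    (hPm : generateFrom P ≤ mX) (hφ : Integrable φ ν) (h : ∀ p ∈ P, ∫ y in p, φ y ∂ν = 0)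
    {S : Set X} (hS : MeasurableSet[generateFrom P] S) : ∫ y in S, φ y ∂ν = 0 := by
  induction S, hS using induction_on_inter rfl fun s hs t ht _ => hP.inter_mem hs ht with
  | empty => simp
  | basic t ht => exact h t ht
  | compl t ht iht =>
    have huniv := integral_add_compl (hPm t ht) hφ
    rw [iht, zero_add] at huniv
    rw [huniv, ← setIntegral_univ, h univ hP.univ_mem]
  | iUnion f hd hfm ihf =>
    rw [integral_iUnion (fun i => hPm _ (hfm i)) hd hφ.integrableOn]
    simp [ihf]

theorem setIntegral_eq_zero_of_measurableSet_aeClosure {Q : MeasurableSpace X}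
    [MeasurableSpace X] {ν : Measure X} {φ : X → E}
    (h : ∀ S, MeasurableSet[Q] S → ∫ y in S, φ y ∂ν = 0) {S : Set X}
    (hS : MeasurableSet[aeClosure ν Q] S) : ∫ y in S, φ y ∂ν = 0 := by
  obtain ⟨S', hS', hSS'⟩ := hS
  rw [setIntegral_congr_set hSS']
  exact h S' hS'

end SetIntegral

section CondExp

variable {X : Type*} {m : MeasurableSpace X}

theorem ae_measure_eq_zero_of_condExp_eq_integral [MeasurableSpace X] {μ : Measure X}
    {μx : X → Measure X} [∀ x, IsFiniteMeasure (μx x)]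
    (hdecomp : ∀ g : X → ℝ, Measurable g → (∃ C : ℝ, ∀ x, |g x| ≤ C) →
      ∀ᵐ x ∂μ, (μ[g | m]) x = ∫ y, g y ∂(μx x))
    {N : Set X} (hN : MeasurableSet N) (hμN : μ N = 0) : ∀ᵐ x ∂μ, μx x N = 0 := by
  have hzero : μ[N.indicator (1 : X → ℝ) | m] =ᵐ[μ] 0 := by
    have h1 : N.indicator (1 : X → ℝ) =ᵐ[μ] 0 := by
      filter_upwards [measure_eq_zero_iff_ae_notMem.1 hμN] with y hy
      simp [hy]
    exact (condExp_congr_ae h1).trans condExp_zero.eventuallyEq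
  filter_upwards [hdecomp _ (measurable_one.indicator hN) ⟨1, fun y => by
    by_cases hy : y ∈ N <;> simp [hy]⟩, hzero] with x hx hx0
  rw [hx0, integral_indicator_one hN] at hx
  exact (measureReal_eq_zero_iff (measure_ne_top _ _)).1 hx.symm

theorem ae_setIntegral_eq_zero_of_condExp_eq_zero {W : MeasurableSpace X}
    [mX : MeasurableSpace X] {μ : Measure X} [IsFiniteMeasure μ] {μx : X → Measure X}
    (hmW : m ≤ W) (hW : W ≤ mX)
    (hdecomp : ∀ g : X → ℝ, Measurable g → (∃ C : ℝ, ∀ x, |g x| ≤ C) →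
      ∀ᵐ x ∂μ, (μ[g | m]) x = ∫ y, g y ∂(μx x))
    {φ : X → ℝ} (hφ : Measurable φ) {C : ℝ} (hC : ∀ y, |φ y| ≤ C) (hφW : μ[φ | W] =ᵐ[μ] 0)
    {S : Set X} (hS : MeasurableSet[W] S) : ∀ᵐ x ∂μ, ∫ y in S, φ y ∂(μx x) = 0 := by
  have hzero : μ[S.indicator φ | m] =ᵐ[μ] 0 :=
    calc μ[S.indicator φ | m]
        =ᵐ[μ] μ[μ[S.indicator φ | W] | m] := (condExp_condExp_of_le hmW hW).symm
      _ =ᵐ[μ] μ[S.indicator (μ[φ | W]) | m] :=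
        condExp_congr_ae (condExp_indicator (hφ.integrable_of_abs_le hC) hS)
      _ =ᵐ[μ] μ[(0 : X → ℝ) | m] := condExp_congr_ae (by
          filter_upwards [hφW] with y hy
          by_cases hyS : y ∈ S <;> simp [hyS, hy])
      _ = 0 := condExp_zero
  filter_upwards [hdecomp _ (hφ.indicator (hW S hS)) ⟨C, fun y => by
    by_cases hy : y ∈ S <;> simp [hy, hC y, (abs_nonneg _).trans (hC y)]⟩, hzero] with x hx hx0
  rw [← integral_indicator (hW S hS), ← hx, hx0, Pi.zero_apply]

theorem exists_abs_le_ae_eq_condExp [mX : MeasurableSpace X] {μ : Measure X}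
    [IsFiniteMeasure μ] (hm : m ≤ mX) {f : X → ℝ} (hf : Measurable f) {R : ℝ≥0}
    (hfR : ∀ y, |f y| ≤ R) {u : X → ℝ} (hu : Measurable[m] u) (hu_eq : u =ᵐ[μ] μ[f | m]) :
    ∃ g : X → ℝ, Measurable[m] g ∧ (∀ y, |g y| ≤ R) ∧ g =ᵐ[μ] u ∧ μ[f - g | m] =ᵐ[μ] 0 := by
  have hfg : ∀ᵐ y ∂μ, max (-(R : ℝ)) (min (u y) R) = u y := by
    filter_upwards [hu_eq, ae_bdd_abs_condExp_of_ae_bdd_abs (m := m) (.of_forall hfR)]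
      with y hy hyR
    rw [← hy] at hyR
    rw [min_eq_left (abs_le.1 hyR).2, max_eq_right (abs_le.1 hyR).1]
  have hgm : Measurable[m] fun y => max (-(R : ℝ)) (min (u y) R) :=
    measurable_const.max (hu.min measurable_const)
  have hgR (y : X) : |max (-(R : ℝ)) (min (u y) R)| ≤ R :=
    abs_le.2 ⟨le_max_left _ _, max_le (by simp) (min_le_right _ _)⟩
  have hgi : Integrable (fun y => max (-(R : ℝ)) (min (u y) R)) μ :=
    (hgm.mono hm le_rfl).integrable_of_abs_le hgR
  refine ⟨_, hgm, hgR, hfg, ?_⟩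
  filter_upwards [condExp_sub (hf.integrable_of_abs_le hfR) hgi m, hfg, hu_eq] with y hy hgy hfy
  rw [hy, Pi.sub_apply, condExp_of_stronglyMeasurable hm hgm.stronglyMeasurable hgi]
  beta_reduce
  rw [hgy, hfy, sub_self, Pi.zero_apply]

theorem ae_eq_condExp_of_forall_setIntegral_sub_eq_zero [mX : MeasurableSpace X]
    {ν : Measure X} [IsFiniteMeasure ν] (hm : m ≤ mX) {f g : X → ℝ} (hf : Integrable f ν)
    (hg : Integrable g ν) (hgm : StronglyMeasurable[m] g)
    (h : ∀ S, MeasurableSet[m] S → ∫ y in S, (f - g) y ∂ν = 0) : g =ᵐ[ν] ν[f | m] :=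
  ae_eq_condExp_of_forall_setIntegral_eq hm hf (fun _ _ _ => hg.integrableOn)
    (fun S hS _ => by
      rw [← sub_eq_zero, ← integral_sub hg.integrableOn hf.integrableOn, ← neg_eq_zero,
        ← integral_neg]
      simpa using h S hS)
    hgm.aestronglyMeasurable

end CondExp

theorem condexp_on_ergodic_components_general
    {X : Type*} [mX : MeasurableSpace X] [StandardBorelSpace X]
    (μ : Measure X) [IsProbabilityMeasure μ]
    (T₁ T₂ : X ≃ᵐ X)
    -- the ergodic decomposition `x ↦ μₓ` of `μ` under `T₁` and `T₂`
    (μx : X → Measure X)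
    (hprob : ∀ x, IsProbabilityMeasure (μx x))
    (hinv1 : ∀ x, MeasurePreserving T₁ (μx x) (μx x))
    (hinv2 : ∀ x, MeasurePreserving T₂ (μx x) (μx x))
    (hdecomp : ∀ g : X → ℝ, Measurable g → (∃ C : ℝ, ∀ x, |g x| ≤ C) →
      ∀ᵐ x ∂μ, (μ[g | invSigma ⇑T₁ ⊓ invSigma ⇑T₂]) x = ∫ y, g y ∂(μx x))
    -- the function `f` and a `𝒲`-measurable representative of `E_μ(f | 𝒲)`
    (f : X → ℝ) (hf : Measurable f) (hfb : ∃ C : ℝ, ∀ x, |f x| ≤ C)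
    (ftil : X → ℝ) (hftil : Measurable[invSigma ⇑T₁ ⊔ invSigma ⇑T₂] ftil)
    (hrep : ftil =ᵐ[μ] μ[f | invSigma ⇑T₁ ⊔ invSigma ⇑T₂]) :
    ∀ᵐ x ∂μ, (μx x)[f | invSigma ⇑T₁ ⊔ invSigma ⇑T₂] =ᵐ[μx x] ftil := by
  have := hprob
  have hW : invSigma ⇑T₁ ⊔ invSigma ⇑T₂ ≤ mX := sup_le (fun _ hs => hs.1) fun _ hs => hs.1
  obtain ⟨R, hfR⟩ : ∃ R : ℝ≥0, ∀ y, |f y| ≤ R :=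
    let ⟨C, hC⟩ := hfb; ⟨C.toNNReal, fun y => (hC y).trans (Real.le_coe_toNNReal C)⟩
  -- `hdecomp` only applies to everywhere bounded functions, so `ftil` is replaced by `g`
  obtain ⟨g, hgW, hgR, hg, hφ⟩ := exists_abs_le_ae_eq_condExp hW hf hfR hftil hrep
  have hgm : Measurable g := hgW.mono hW le_rfl
  have hfgR (y : X) : |(f - g) y| ≤ R + R := (abs_sub _ _).trans (add_le_add (hfR y) (hgR y))
  obtain ⟨P, hPc, hP, hPW, hWP⟩ :=
    exists_countable_isSetAlgebra_sup_invSigma_le_aeClosure T₁.measurable T₂.measurable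
  have h_test : ∀ᵐ x ∂μ, ∀ p ∈ P, ∫ y in p, (f - g) y ∂(μx x) = 0 :=
    (ae_ball_iff hPc).2 fun p hp => ae_setIntegral_eq_zero_of_condExp_eq_zero
      (inf_le_left.trans le_sup_left) hW hdecomp (hf.sub hgm) hfgR hφ
      (hPW _ (measurableSet_generateFrom hp))
  have h_null : ∀ᵐ x ∂μ, g =ᵐ[μx x] ftil := ae_measure_eq_zero_of_condExp_eq_integral hdecomp
    (measurableSet_eq_fun hgm (hftil.mono hW le_rfl)).compl hg
  filter_upwards [h_test, h_null] with x hx hgx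
  refine (ae_eq_condExp_of_forall_setIntegral_sub_eq_zero hW (hf.integrable_of_abs_le hfR)
    (hgm.integrable_of_abs_le hgR) hgW.stronglyMeasurable fun S hS => ?_).symm.trans hgx
  exact setIntegral_eq_zero_of_measurableSet_aeClosure (fun S' hS' =>
    setIntegral_eq_zero_of_measurableSet_generateFrom hP (hPW.trans hW)
      ((hf.sub hgm).integrable_of_abs_le hfgR) hx hS') (hWP (μx x) (hinv1 x) (hinv2 x) S hS)

theorem condexp_on_ergodic_components
    {X : Type*} [mX : MeasurableSpace X] [StandardBorelSpace X]
    (μ : Measure X) [IsProbabilityMeasure μ]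
    (T₁ T₂ : X ≃ᵐ X)
    (h₁ : MeasurePreserving T₁ μ μ) (h₂ : MeasurePreserving T₂ μ μ)
    (hcomm : ∀ x, T₁ (T₂ x) = T₂ (T₁ x))
    -- the ergodic decomposition `x ↦ μₓ` of `μ` under `T₁` and `T₂`
    (μx : X → Measure X)
    (hprob : ∀ x, IsProbabilityMeasure (μx x))
    (hinv1 : ∀ x, MeasurePreserving T₁ (μx x) (μx x))
    (hinv2 : ∀ x, MeasurePreserving T₂ (μx x) (μx x))
    (herg : ∀ x, ∀ s : Set X, MeasurableSet s → T₁ ⁻¹' s = s → T₂ ⁻¹' s = s →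
      μx x s = 0 ∨ μx x s = 1)
    (hmeasfam : Measurable[invSigma ⇑T₁ ⊓ invSigma ⇑T₂] μx)
    (hdecomp : ∀ g : X → ℝ, Measurable g → (∃ C : ℝ, ∀ x, |g x| ≤ C) →
      ∀ᵐ x ∂μ, (μ[g | invSigma ⇑T₁ ⊓ invSigma ⇑T₂]) x = ∫ y, g y ∂(μx x))
    -- the function `f` and a `𝒲`-measurable representative of `E_μ(f | 𝒲)`
    (f : X → ℝ) (hf : Measurable f) (hfb : ∃ C : ℝ, ∀ x, |f x| ≤ C)
    (ftil : X → ℝ) (hftil : Measurable[invSigma ⇑T₁ ⊔ invSigma ⇑T₂] ftil)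
    (hrep : ftil =ᵐ[μ] μ[f | invSigma ⇑T₁ ⊔ invSigma ⇑T₂]) :
    ∀ᵐ x ∂μ, (μx x)[f | invSigma ⇑T₁ ⊔ invSigma ⇑T₂] =ᵐ[μx x] ftil :=
  condexp_on_ergodic_components_general (mX := mX) μ T₁ T₂ μx hprob hinv1 hinv2 hdecomp f hf hfb
    ftil hftil hrep
end

section
/- Let Y = {0,1,2}^ℤ with the product measure ν = τ^ℤ, where τ is the uniform probability measure on {0,1,2}, and let S be the shift (Sy)ₙ = y_{n+1}. Let X = Y × Y × Y with μ = ν × ν × ν, T₁ = S × id × S, T₂ = id × S × S. Define f : {0,1,2}³ → {0,1} by: f(0,0,0)=0, f(0,0,1)=0, f(0,0,2)=1; f(0,1,0)=0, f(0,1,1)=1, f(0,1,2)=1; f(0,2,0)=1, f(0,2,1)=1, f(0,2,2)=0; f(1,0,0)=0, f(1,0,1)=0, f(1,0,2)=1; f(1,1,0)=0, f(1,1,1)=0, f(1,1,2)=1; f(1,2,0)=1, f(1,2,1)=1, f(1,2,2)=1; f(2,0,0)=1, f(2,0,1)=1, f(2,0,2)=1; f(2,1,0)=1, f(2,1,1)=1,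 f(2,1,2)=0; f(2,2,0)=1, f(2,2,1)=0, f(2,2,2)=0. Let A = {(y,z,w) ∈ X : f(y₀, z₀, w₀) = 1}. Then μ(A) = 16/27 and, for every integer n ≠ 0, μ(A ∩ T₁ⁿA ∩ T₂ⁿA) = 145/729; in particular μ(A ∩ T₁ⁿA ∩ T₂ⁿA) < 0.96·μ(A)³ for every n ≠ 0. -/
/-! Both sets are determined by finitely many coordinates of the three factors: `A` by the
coordinates `0`, and `A ∩ T₁ⁿA ∩ T₂ⁿA` by the coordinates `0` and `-n`, which are distinct
because `n ≠ 0`. Under `μ` these coordinate vectors are uniformly distributed on `{0,1,2}³`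
and on `({0,1,2}²)³`, so the two measures are pattern counts of `f`: `16/27` and `145/729`.
Finally `145/729 ≈ 0.1989 < 0.96 · (16/27)³ ≈ 0.1998`. -/

open MeasureTheory
open scoped ENNReal

/-- The two-sided shift `(Sy)ₙ = y_{n+1}` on `{0,1,2}^ℤ`, as a measurable
equivalence. -/
def shiftE : (ℤ → Fin 3) ≃ᵐ (ℤ → Fin 3) where
  toEquiv :=
    { toFun := fun y m => y (m + 1)
      invFun := fun y m => y (m - 1)
      left_inv := fun y => funext fun m => by simp
      right_inv := fun y => funext fun m => by simp }
  measurable_toFun := measurable_pi_lambda _ fun m => measurable_pi_apply _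
  measurable_invFun := measurable_pi_lambda _ fun m => measurable_pi_apply _

/-- The function `f : {0,1,2}³ → {0,1}` given by the table in the paper. -/
def fTable : Fin 3 → Fin 3 → Fin 3 → ℕ :=
  ![![![0, 0, 1], ![0, 1, 1], ![1, 1, 0]],
    ![![0, 0, 1], ![0, 0, 1], ![1, 1, 1]],
    ![![1, 1, 1], ![1, 1, 0], ![1, 0, 0]]]

open Finset Equiv

namespace Equiv.Perm

def prodCongrHom (α β : Type*) : Perm α × Perm β →* Perm (α × β) where
  toFun σ := σ.1.prodCongr σ.2
  map_one' := rfl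
  map_mul' _ _ := rfl

variable {α β γ : Type*}

theorem prodCongr_zpow (σ : Perm α) (τ : Perm β) (n : ℤ) :
    σ.prodCongr τ ^ n = (σ ^ n).prodCongr (τ ^ n) :=
  (map_zpow (prodCongrHom α β) (σ, τ) n).symm

theorem image_zpow_prodCongr_prodCongr_setOf (σ₁ : Perm α) (σ₂ : Perm β) (σ₃ : Perm γ) (n : ℤ)
    (P : α → β → γ → Prop) :
    ⇑(σ₁.prodCongr (σ₂.prodCongr σ₃) ^ n) '' {p | P p.1 p.2.1 p.2.2} =
      {p | P ((σ₁ ^ (-n)) p.1) ((σ₂ ^ (-n)) p.2.1) ((σ₃ ^ (-n)) p.2.2)} := by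
  rw [image_eq_preimage_symm, ← inv_def, ← zpow_neg, prodCongr_zpow, prodCongr_zpow]
  rfl

end Equiv.Perm

theorem shiftE_zpow_apply (n : ℤ) (y : ℤ → Fin 3) (m : ℤ) :
    (shiftE.toEquiv ^ n) y m = y (m + n) := by
  induction n using Int.induction_on generalizing y m with
  | zero => simp
  | succ k ih =>
    rw [zpow_add_one, Perm.mul_apply, ih]
    exact congrArg y (by ring)
  | pred k ih =>
    rw [zpow_sub_one, Perm.mul_apply, ih]
    exact congrArg y (by ring)

section CountingMeasure

variable {Y β : Type*} [MeasurableSpace Y] [MeasurableSpace β] [MeasurableSingletonClass β]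

theorem measure_preimage_finset_eq_card_mul (ρ : Measure Y) {r : Y → β} (hr : Measurable r)
    {c : ℝ≥0∞} (hc : ∀ b, ρ (r ⁻¹' {b}) = c) (E : Finset β) :
    ρ (r ⁻¹' E) = #E * c := by
  rw [← Measure.map_apply hr E.measurableSet, ← sum_measure_singleton]
  simp [Measure.map_apply hr, hc]

theorem measure_prod_prod_preimage_eq_card_mul (ν : Measure Y) [SigmaFinite ν] {r : Y → β}
    (hr : Measurable r) {c : ℝ≥0∞} (hc : ∀ b, ν (r ⁻¹' {b}) = c) (E : Finset (β × β × β)) :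
    ν.prod (ν.prod ν) (Prod.map r (Prod.map r r) ⁻¹' E) = #E * c ^ 3 := by
  refine measure_preimage_finset_eq_card_mul _ (hr.prodMap (hr.prodMap hr)) (fun b => ?_) E
  rw [← Set.singleton_prod_singleton, ← Set.singleton_prod_singleton, Set.preimage_prod_map_prod,
    Set.preimage_prod_map_prod, Measure.prod_prod, Measure.prod_prod, hc, hc, hc]
  ring

end CountingMeasure

section Cylinders

variable {ν : Measure (ℤ → Fin 3)}
  (hcyl : ∀ (s : Finset ℤ) (a : ℤ → Fin 3),
    ν {y : ℤ → Fin 3 | ∀ i ∈ s, y i = a i} = (1 / 3 : ℝ≥0∞) ^ s.card)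
include hcyl

theorem measure_eval_zero_preimage_singleton (a : Fin 3) :
    ν ((fun y : ℤ → Fin 3 => y 0) ⁻¹' {a}) = 1 / 3 := by
  simpa [Set.preimage] using hcyl {0} fun _ => a

theorem measure_eval_pair_preimage_singleton {m : ℤ} (hm : m ≠ 0) (a : Fin 3 × Fin 3) :
    ν ((fun y : ℤ → Fin 3 => (y 0, y m)) ⁻¹' {a}) = (1 / 3) ^ 2 := by
  have h := hcyl {0, m} fun i => if i = 0 then a.1 else a.2
  rw [card_pair hm.symm] at h
  convert h using 2
  ext y
  simp [hm, Prod.ext_iff]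

theorem measure_fTable_setOf [SigmaFinite ν] :
    ν.prod (ν.prod ν) {p | fTable (p.1 0) (p.2.1 0) (p.2.2 0) = 1} = 16 / 27 := by
  have h := measure_prod_prod_preimage_eq_card_mul ν (measurable_pi_apply 0)
    (measure_eval_zero_preimage_singleton hcyl) {t | fTable t.1 t.2.1 t.2.2 = 1}
  rw [show #_ = 16 by decide] at h
  convert h using 2
  · ext p; simp
  · rw [← ENNReal.toReal_eq_toReal_iff' (by finiteness) (by finiteness)]
    norm_num

theorem measure_fTable_setOf_inter_shifts [SigmaFinite ν] {m : ℤ} (hm : m ≠ 0) :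
    ν.prod (ν.prod ν) ({p | fTable (p.1 0) (p.2.1 0) (p.2.2 0) = 1} ∩
      {p | fTable (p.1 m) (p.2.1 0) (p.2.2 m) = 1} ∩
      {p | fTable (p.1 0) (p.2.1 m) (p.2.2 m) = 1}) = 145 / 729 := by
  have h := measure_prod_prod_preimage_eq_card_mul ν
    ((measurable_pi_apply 0).prodMk (measurable_pi_apply m))
    (measure_eval_pair_preimage_singleton hcyl hm)
    {t | fTable t.1.1 t.2.1.1 t.2.2.1 = 1 ∧ fTable t.1.2 t.2.1.1 t.2.2.2 = 1 ∧
      fTable t.1.1 t.2.1.2 t.2.2.2 = 1}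
  rw [show #_ = 145 by set_option maxRecDepth 10000 in decide] at h
  convert h using 2
  · ext p; simp [and_assoc]
  · rw [← ENNReal.toReal_eq_toReal_iff' (by finiteness) (by finiteness)]
    norm_num

end Cylinders

theorem bernoulli_counterexample_computation
    (ν : Measure (ℤ → Fin 3)) [IsProbabilityMeasure ν]
    -- `ν` is the product measure `τ^ℤ` where `τ` is uniform on `{0,1,2}`:
    -- every cylinder set has the expected measure.
    (hcyl : ∀ (s : Finset ℤ) (a : ℤ → Fin 3),
      ν {y : ℤ → Fin 3 | ∀ i ∈ s, y i = a i} = (1 / 3 : ℝ≥0∞) ^ s.card) :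
    let μ : Measure ((ℤ → Fin 3) × (ℤ → Fin 3) × (ℤ → Fin 3)) := ν.prod (ν.prod ν)
    let T₁ := shiftE.prodCongr ((MeasurableEquiv.refl (ℤ → Fin 3)).prodCongr shiftE)
    let T₂ := (MeasurableEquiv.refl (ℤ → Fin 3)).prodCongr (shiftE.prodCongr shiftE)
    let A : Set ((ℤ → Fin 3) × (ℤ → Fin 3) × (ℤ → Fin 3)) :=
      {p | fTable (p.1 0) (p.2.1 0) (p.2.2 0) = 1}
    μ A = 16 / 27 ∧
      ∀ n : ℤ, n ≠ 0 →
        μ (A ∩ ⇑(T₁.toEquiv ^ n) '' A ∩ ⇑(T₂.toEquiv ^ n) '' A) = 145 / 729 ∧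
        μ (A ∩ ⇑(T₁.toEquiv ^ n) '' A ∩ ⇑(T₂.toEquiv ^ n) '' A) <
          (96 / 100 : ℝ≥0∞) * μ A ^ 3 := by
  intro μ T₁ T₂ A
  have hA : μ A = 16 / 27 := measure_fTable_setOf hcyl
  refine ⟨hA, fun n hn => ?_⟩
  have hT₁ : ⇑(T₁.toEquiv ^ n) '' A = {p | fTable (p.1 (-n)) (p.2.1 0) (p.2.2 (-n)) = 1} := by
    refine (Perm.image_zpow_prodCongr_prodCongr_setOf shiftE.toEquiv (1 : Perm (ℤ → Fin 3))
      shiftE.toEquiv n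
      fun y z w => fTable (y 0) (z 0) (w 0) = 1).trans ?_
    simp only [one_zpow, Perm.coe_one, id, shiftE_zpow_apply, zero_add]
  have hT₂ : ⇑(T₂.toEquiv ^ n) '' A = {p | fTable (p.1 0) (p.2.1 (-n)) (p.2.2 (-n)) = 1} := by
    refine (Perm.image_zpow_prodCongr_prodCongr_setOf (1 : Perm (ℤ → Fin 3))
      shiftE.toEquiv shiftE.toEquiv n
      fun y z w => fTable (y 0) (z 0) (w 0) = 1).trans ?_
    simp only [one_zpow, Perm.coe_one, id, shiftE_zpow_apply, zero_add]
  have hB : μ (A ∩ ⇑(T₁.toEquiv ^ n) '' A ∩ ⇑(T₂.toEquiv ^ n) '' A) = 145 / 729 := by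
    rw [hT₁, hT₂]
    exact measure_fTable_setOf_inter_shifts hcyl (neg_ne_zero.2 hn)
  refine ⟨hB, ?_⟩
  rw [hB, hA, ← ENNReal.toReal_lt_toReal (by finiteness) (by finiteness)]
  norm_num
end

section
/- Let Y = {0,1,2}^ℤ with the product measure ν = τ^ℤ, where τ is the uniform probability measure on {0,1,2}, and let S be the shift (Sy)ₙ = y_{n+1}. Then the system (Y × Y × Y, ν × ν × ν, S × id × S, id × S × S) is ergodic: every measurable subset of Y × Y × Y invariant under both S × id × S and id × S × S has measure 0 or 1. -/
/-!
Identify `Y × Y × Y` with `Fin 3 × ℤ → Fin 3` carrying the product of uniform measures. The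
composite `T = (id × S × S) ∘ (S × id × S) = S × S × S²` becomes the reindexing by
`(c, i) ↦ (c, i + k c)` with `k = (1, 1, 2)`, and a large iterate of it moves any finite window
of coordinates off itself. So if `A` is a cylinder close to an invariant set `s`, then for a
suitable `n` we get `μ s = μ (T⁻ⁿ s ∩ s) ≈ μ (T⁻ⁿ A ∩ A) = (μ A)² ≈ (μ s)²`, hence `μ s = (μ s)²`.
-/

open MeasureTheory
open scoped ENNReal

open Measure ProbabilityTheory Set
open scoped symmDiff

section
variable {Ω : Type*} [MeasurableSpace Ω] {μ : Measure Ω}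

lemma abs_measureReal_inter_sub_inter_le [IsFiniteMeasure μ] {a b c d : Set Ω}
    (ha : MeasurableSet a) (hb : MeasurableSet b) (hc : MeasurableSet c) (hd : MeasurableSet d) :
    |μ.real (a ∩ b) - μ.real (c ∩ d)| ≤ μ.real (a ∆ c) + μ.real (b ∆ d) :=
  calc |μ.real (a ∩ b) - μ.real (c ∩ d)| ≤ μ.real ((a ∩ b) ∆ (c ∩ d)) :=
        abs_measureReal_sub_le_measureReal_symmDiff (ha.inter hb).nullMeasurableSet
          (hc.inter hd).nullMeasurableSet
    _ ≤ μ.real (a ∆ c ∪ b ∆ d) := measureReal_mono fun x => by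
        simp only [mem_symmDiff, mem_inter_iff, mem_union]
        tauto
    _ ≤ μ.real (a ∆ c) + μ.real (b ∆ d) := measureReal_union_le _ _

variable [IsProbabilityMeasure μ]

lemma abs_measureReal_sub_mul_self_le {s A : Set Ω} (hs : MeasurableSet s)
    (hA : MeasurableSet A) {f : Ω → Ω} (hf : MeasurePreserving f μ μ) (hfs : f ⁻¹' s = s)
    (hfA : μ (f ⁻¹' A ∩ A) = μ A * μ A) :
    |μ.real s - μ.real s * μ.real s| ≤ 4 * μ.real (s ∆ A) := by
  set δ := μ.real (s ∆ A)
  have h_pre : μ.real ((f ⁻¹' s) ∆ (f ⁻¹' A)) = δ := by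
    rw [← preimage_symmDiff, hf.measureReal_preimage (hs.symmDiff hA).nullMeasurableSet]
  have h_sq : μ.real (f ⁻¹' A ∩ A) = μ.real A * μ.real A := by
    simp only [measureReal_def, hfA, ENNReal.toReal_mul]
  have h_inter := abs_measureReal_inter_sub_inter_le (μ := μ) (hf.measurable hs) hs
    (hf.measurable hA) hA
  rw [h_pre, h_sq, hfs, inter_self] at h_inter
  have h_approx : |μ.real s - μ.real A| ≤ δ :=
    abs_measureReal_sub_le_measureReal_symmDiff hs.nullMeasurableSet hA.nullMeasurableSet
  have hs1 : μ.real s ≤ 1 := measureReal_le_one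
  have hA1 : μ.real A ≤ 1 := measureReal_le_one
  have hs0 : 0 ≤ μ.real s := measureReal_nonneg
  have hA0 : 0 ≤ μ.real A := measureReal_nonneg
  rw [abs_le] at h_inter h_approx ⊢
  constructor <;> nlinarith

theorem measure_eq_zero_or_one_of_measureDense_of_mixing {C : Set (Set Ω)}
    (hC : μ.MeasureDense C) {s : Set Ω} (hs : MeasurableSet s)
    (hmix : ∀ A ∈ C, ∃ f : Ω → Ω, MeasurePreserving f μ μ ∧ f ⁻¹' s = s ∧
      μ (f ⁻¹' A ∩ A) = μ A * μ A) :
    μ s = 0 ∨ μ s = 1 := by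
  have h_abs : |μ.real s - μ.real s * μ.real s| ≤ 0 := by
    refine le_of_forall_pos_lt_add fun ε hε => ?_
    obtain ⟨A, hAC, hsA⟩ := hC.approx s hs (measure_ne_top μ s) (ε / 5) (by positivity)
    obtain ⟨f, hf, hfs, hfA⟩ := hmix A hAC
    have hδ : μ.real (s ∆ A) < ε / 5 := ENNReal.toReal_lt_of_lt_ofReal hsA
    have := abs_measureReal_sub_mul_self_le hs (hC.measurable A hAC) hf hfs hfA
    linarith
  have h_idem : μ.real s * μ.real s = μ.real s := by
    linarith [abs_nonpos_iff.1 h_abs]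
  rcases mul_left_eq_self₀.1 h_idem with h | h
  · exact Or.inr ((ENNReal.toReal_eq_one_iff _).1 h)
  · exact Or.inl ((measureReal_eq_zero_iff).1 h)
end

section
variable {ι α : Type*} [MeasurableSpace α] (τ : Measure α) [IsProbabilityMeasure τ]

lemma measurePreserving_comp_infinitePi {σ : ι → ι} (hσ : σ.Injective) :
    MeasurePreserving (fun x : ι → α => x ∘ σ) (infinitePi fun _ => τ)
      (infinitePi fun _ => τ) :=
  ⟨by fun_prop, map_infinitePi_infinitePi_of_inj hσ⟩

lemma infinitePi_preimage_comp_cylinder_inter {σ : ι → ι} {J : Finset ι}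
    (hJ : Disjoint (σ '' J) J) {S T : Set (J → α)} (hS : MeasurableSet S)
    (hT : MeasurableSet T) :
    infinitePi (fun _ => τ) ((fun x => x ∘ σ) ⁻¹' cylinder J S ∩ cylinder J T) =
      infinitePi (fun _ => τ) ((fun x => x ∘ σ) ⁻¹' cylinder J S) *
        infinitePi (fun _ => τ) (cylinder J T) := by
  classical
  have h_indep := (iIndepFun_infinitePi (P := fun _ : ι => τ) (X := fun _ => id)
    fun _ => measurable_id).indepFun_finset (J.image σ) J (by simpa [← Finset.disjoint_coe])
      fun _ => by fun_prop
  let g : (J.image σ → α) → (J → α) := fun y j => y ⟨σ j, Finset.mem_image_of_mem σ j.2⟩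
  have hg : Measurable g := by fun_prop
  exact (h_indep.comp hg measurable_id).measure_inter_preimage_eq_mul S T hS hT

theorem infinitePi_eq_zero_or_one_of_preimage_comp_eq {σ : ι → ι} (hσ : σ.Injective)
    (h_wander : ∀ J : Finset ι, ∃ n, Disjoint (σ^[n] '' J) J) {s : Set (ι → α)}
    (hs : MeasurableSet s) (h_inv : (fun x => x ∘ σ) ⁻¹' s = s) :
    infinitePi (fun _ => τ) s = 0 ∨ infinitePi (fun _ => τ) s = 1 := by
  have h_inv_iter : ∀ n, (fun x : ι → α => x ∘ σ^[n]) ⁻¹' s = s := by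
    intro n
    induction n with
    | zero => rfl
    | succ n ih =>
      rw [Function.iterate_succ]
      change (fun x : ι → α => x ∘ σ^[n]) ⁻¹' ((fun x => x ∘ σ) ⁻¹' s) = s
      rw [h_inv, ih]
  refine measure_eq_zero_or_one_of_measureDense_of_mixing
    (.of_generateFrom_isSetAlgebra_finite _ isSetAlgebra_measurableCylinders
      generateFrom_measurableCylinders.symm) hs fun A hA => ?_
  obtain ⟨J, S, hS, rfl⟩ := (mem_measurableCylinders A).1 hA
  obtain ⟨n, hn⟩ := h_wander J
  have hf := measurePreserving_comp_infinitePi τ (hσ.iterate n)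
  refine ⟨_, hf, h_inv_iter n, ?_⟩
  rw [infinitePi_preimage_comp_cylinder_inter τ hn hS hS,
    hf.measure_preimage hS.cylinder.nullMeasurableSet]
end

lemma eq_infinitePi_of_forall_restrict_preimage_singleton {ι : Type*} {X : ι → Type*}
    [∀ i, MeasurableSpace (X i)] [∀ i, Countable (X i)] [∀ i, MeasurableSingletonClass (X i)]
    (P : ∀ i, Measure (X i)) [∀ i, IsProbabilityMeasure (P i)] {ν : Measure (∀ i, X i)}
    (h : ∀ (s : Finset ι) (b : ∀ i : s, X i), ν (s.restrict ⁻¹' {b}) = ∏ i : s, P i {b i}) :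
    ν = infinitePi P :=
  ((isProjectiveLimit_infinitePi P).unique fun s => ext_of_singleton fun b => by
    rw [map_apply (Finset.measurable_restrict s) (measurableSet_singleton b), h, pi_singleton]).symm

lemma eq_infinitePi_uniformOfFintype {ι α : Type*} [Fintype α] [Nonempty α] [MeasurableSpace α]
    [MeasurableSingletonClass α] {ν : Measure (ι → α)}
    (h : ∀ (s : Finset ι) (a : ι → α),
      ν {y | ∀ i ∈ s, y i = a i} = (Fintype.card α : ℝ≥0∞)⁻¹ ^ s.card) :
    ν = infinitePi fun _ => (PMF.uniformOfFintype α).toMeasure := by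
  classical
  refine eq_infinitePi_of_forall_restrict_preimage_singleton _ fun s b => ?_
  let a : ι → α := fun i => if hi : i ∈ s then b ⟨i, hi⟩ else Classical.arbitrary α
  have h_cyl : s.restrict ⁻¹' ({b} : Set (s → α)) = {y | ∀ i ∈ s, y i = a i} := by
    ext y
    simp only [mem_preimage, mem_singleton_iff, funext_iff, Subtype.forall, mem_ofPred_eq]
    exact forall₂_congr fun i hi => by simp [a, hi]
  simp [h_cyl, h]

def toTriple {ι α : Type*} (x : Fin 3 × ι → α) : (ι → α) × (ι → α) × (ι → α) :=
  (fun i => x (0, i), fun i => x (1, i), fun i => x (2, i))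

lemma measurePreserving_toTriple {ι α : Type*} [MeasurableSpace α]
    (τ : Measure α) [IsProbabilityMeasure τ] :
    MeasurePreserving toTriple (infinitePi fun _ : Fin 3 × ι => τ)
      ((infinitePi fun _ : ι => τ).prod
        ((infinitePi fun _ : ι => τ).prod (infinitePi fun _ : ι => τ))) := by
  have h_curry : MeasurePreserving (MeasurableEquiv.curry (Fin 3) ι α) (infinitePi fun _ => τ)
      (Measure.pi fun _ : Fin 3 => infinitePi fun _ : ι => τ) :=
    ⟨(MeasurableEquiv.curry _ _ _).measurable, by
      rw [infinitePi_map_curry (fun _ _ => τ), infinitePi_eq_pi]⟩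
  have h_split := measurePreserving_piFinSuccAbove (fun _ : Fin 3 => infinitePi fun _ : ι => τ) 0
  have h_pair := (MeasurePreserving.id (infinitePi fun _ : ι => τ)).prod
    (measurePreserving_finTwoArrow (infinitePi fun _ : ι => τ))
  exact (h_pair.comp h_split).comp h_curry

def shiftBy {κ : Type*} (k : κ → ℤ) (p : κ × ℤ) : κ × ℤ := (p.1, p.2 + k p.1)

lemma shiftBy_injective {κ : Type*} (k : κ → ℤ) : (shiftBy k).Injective := by
  rintro ⟨c, i⟩ ⟨d, j⟩ h
  obtain ⟨rfl, h⟩ := Prod.mk.inj h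
  simp_all

lemma iterate_shiftBy {κ : Type*} (k : κ → ℤ) (n : ℕ) (p : κ × ℤ) :
    (shiftBy k)^[n] p = (p.1, p.2 + n * k p.1) := by
  induction n generalizing p with
  | zero => simp
  | succ n ih =>
    rw [Function.iterate_succ_apply, ih]
    simp only [shiftBy, Prod.mk.injEq, true_and]
    push_cast; ring

lemma exists_disjoint_image_iterate_shiftBy {κ : Type*} {k : κ → ℤ} (hk : ∀ c, 0 < k c)
    (J : Finset (κ × ℤ)) : ∃ n, Disjoint ((shiftBy k)^[n] '' J) J := by
  set M := J.sup fun p => p.2.natAbs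
  have hM : ∀ p ∈ J, p.2.natAbs ≤ M := fun p hp => Finset.le_sup (f := fun p => p.2.natAbs) hp
  refine ⟨2 * M + 1, Set.disjoint_left.2 ?_⟩
  rintro _ ⟨p, hp, rfl⟩ hq
  have h1 := hM p hp
  have h2 := hM _ hq
  have h3 := hk p.1
  rw [iterate_shiftBy] at h2
  have h4 : (2 * M + 1 : ℤ) ≤ ((2 * M + 1 : ℕ) : ℤ) * k p.1 := by push_cast; nlinarith
  generalize ((2 * M + 1 : ℕ) : ℤ) * k p.1 = m at h2 h4
  omega

theorem bernoulli_triple_system_ergodic_general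
    (ν : Measure (ℤ → Fin 3))
    -- `ν` is the product measure `τ^ℤ` where `τ` is uniform on `{0,1,2}`:
    -- every cylinder set has the expected measure.
    (hcyl : ∀ (s : Finset ℤ) (a : ℤ → Fin 3),
      ν {y : ℤ → Fin 3 | ∀ i ∈ s, y i = a i} = (1 / 3 : ℝ≥0∞) ^ s.card) :
    ∀ s : Set ((ℤ → Fin 3) × (ℤ → Fin 3) × (ℤ → Fin 3)), MeasurableSet s →
      ⇑(shiftE.prodCongr ((MeasurableEquiv.refl (ℤ → Fin 3)).prodCongr shiftE)) ⁻¹' s = s →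
      ⇑((MeasurableEquiv.refl (ℤ → Fin 3)).prodCongr (shiftE.prodCongr shiftE)) ⁻¹' s = s →
      (ν.prod (ν.prod ν)) s = 0 ∨ (ν.prod (ν.prod ν)) s = 1 := by
  intro s hs h₁ h₂
  obtain rfl : ν = infinitePi fun _ => (PMF.uniformOfFintype (Fin 3)).toMeasure :=
    eq_infinitePi_uniformOfFintype fun t a => by simpa using hcyl t a
  have h_triple := measurePreserving_toTriple (ι := ℤ) (PMF.uniformOfFintype (Fin 3)).toMeasure
  have h_conj : toTriple ∘ (fun x => x ∘ shiftBy ![1, 1, 2]) =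
      ⇑((MeasurableEquiv.refl (ℤ → Fin 3)).prodCongr (shiftE.prodCongr shiftE)) ∘
        ⇑(shiftE.prodCongr ((MeasurableEquiv.refl (ℤ → Fin 3)).prodCongr shiftE)) ∘ toTriple := by
    funext x
    refine Prod.ext rfl (Prod.ext rfl (funext fun i => ?_))
    show x (2, i + 2) = x (2, i + 1 + 1)
    rw [add_assoc]; rfl
  rw [← h_triple.measure_preimage hs.nullMeasurableSet]
  refine infinitePi_eq_zero_or_one_of_preimage_comp_eq _ (shiftBy_injective ![1, 1, 2])
    (exists_disjoint_image_iterate_shiftBy (by decide)) (h_triple.measurable hs) ?_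
  rw [← preimage_comp, h_conj, preimage_comp, preimage_comp, h₂, h₁]

theorem bernoulli_triple_system_ergodic
    (ν : Measure (ℤ → Fin 3)) [IsProbabilityMeasure ν]
    -- `ν` is the product measure `τ^ℤ` where `τ` is uniform on `{0,1,2}`:
    -- every cylinder set has the expected measure.
    (hcyl : ∀ (s : Finset ℤ) (a : ℤ → Fin 3),
      ν {y : ℤ → Fin 3 | ∀ i ∈ s, y i = a i} = (1 / 3 : ℝ≥0∞) ^ s.card) :
    ∀ s : Set ((ℤ → Fin 3) × (ℤ → Fin 3) × (ℤ → Fin 3)), MeasurableSet s →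
      ⇑(shiftE.prodCongr ((MeasurableEquiv.refl (ℤ → Fin 3)).prodCongr shiftE)) ⁻¹' s = s →
      ⇑((MeasurableEquiv.refl (ℤ → Fin 3)).prodCongr (shiftE.prodCongr shiftE)) ⁻¹' s = s →
      (ν.prod (ν.prod ν)) s = 0 ∨ (ν.prod (ν.prod ν)) s = 1 :=
  bernoulli_triple_system_ergodic_general ν hcyl
end

section
/- Let Z be a compact metrizable abelian group with Haar probability measure θ, and let α ∈ Z be such that the subgroup {nα : n ∈ ℤ} is dense in Z. Let m be a Borel probability measure on Z × Z × Z that is invariant under the two translations τ₁(z₁,z₂,z₃) = (z₁, z₂+α, z₃+α) and τ₂(z₁,z₂,z₃) = (z₁+α, z₂, z₃+α), and jointly ergodic for them (every Borel set invariant under both τ₁ and τ₂ has m-measure 0 or 1). Then there exists c ∈ Z such that m is the translate by (c, 0, 0) of the Haar probability measure of the closed subgroup H = {(z₁,z₂,z₃) ∈ Z³ : z₁ + z₂ − z₃ = 0}. -/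
/-!
The function `φ z = z₁ + z₂ - z₃` is invariant under both translations, so by ergodicity `φ_* m`
is a zero-one measure, hence a Dirac mass `δ_c` on the standard Borel space `Z`: `m` lives on the
coset `H + (c, 0, 0)`. The translations of `Z³` preserving `m` form a subgroup, closed because
translating a finite measure is weakly continuous; it contains `(0, α, α)` and `(α, 0, α)`, hence,
as `ℤ α` is dense, their closed span `H`. Shifting `m` by `(-c, 0, 0)` gives an `H`-invariant
probability measure on `H`.
-/

open MeasureTheory Set BoundedContinuousFunction

namespace MeasureTheory.Measure

section AddGroup

variable {G : Type*} [AddGroup G] [MeasurableSpace G] [MeasurableAdd G]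

lemma map_add_right_map_add_right (μ : Measure G) (a b : G) :
    (μ.map (· + a)).map (· + b) = μ.map (· + (a + b)) := by
  rw [map_map (measurable_add_const b) (measurable_add_const a)]
  simp only [Function.comp_def, add_assoc]

def addRightStabilizer (μ : Measure G) : AddSubgroup G where
  carrier := {g | μ.map (· + g) = μ}
  zero_mem' := by simp
  add_mem' {a b} ha hb := by
    change μ.map _ = μ
    rw [← map_add_right_map_add_right, ha, hb]
  neg_mem' {a} ha := by
    change μ.map _ = μ
    conv_lhs => rw [← ha]
    rw [map_add_right_map_add_right]
    simp

lemma mem_addRightStabilizer {μ : Measure G} {g : G} :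
    g ∈ μ.addRightStabilizer ↔ μ.map (· + g) = μ := Iff.rfl

lemma isClosed_addRightStabilizer [TopologicalSpace G] [IsTopologicalAddGroup G] [BorelSpace G]
    [TopologicalSpace.PseudoMetrizableSpace G] (μ : Measure G) [IsFiniteMeasure μ] :
    IsClosed (μ.addRightStabilizer : Set G) := by
  have hcont (f : G →ᵇ ℝ) : Continuous fun g ↦ ∫ x, f (x + g) ∂μ :=
    continuous_of_dominated (bound := fun _ ↦ ‖f‖)
      (fun g ↦ (f.continuous.comp (continuous_add_const g)).aestronglyMeasurable)
      (fun g ↦ .of_forall fun x ↦ f.norm_coe_le_norm (x + g)) (integrable_const _)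
      (.of_forall fun x ↦ f.continuous.comp (continuous_const_add x))
  have hset : (μ.addRightStabilizer : Set G) =
      ⋂ f : G →ᵇ ℝ, {g | ∫ x, f (x + g) ∂μ = ∫ x, f x ∂μ} := by
    ext g
    have hint (f : G →ᵇ ℝ) : ∫ x, f x ∂(μ.map (· + g)) = ∫ x, f (x + g) ∂μ :=
      integral_map (measurable_add_const g).aemeasurable f.continuous.aestronglyMeasurable
    simp only [SetLike.mem_coe, mem_addRightStabilizer, mem_iInter, mem_ofPred_eq, ← hint]
    exact ⟨fun h f ↦ by rw [h], ext_of_forall_integral_eq_of_IsFiniteMeasure⟩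
  rw [hset]
  exact isClosed_iInter fun f ↦ isClosed_eq (hcont f) continuous_const

end AddGroup

lemma addRightStabilizer_le_addRightStabilizer_map {G : Type*} [AddCommGroup G]
    [MeasurableSpace G] [MeasurableAdd G] (μ : Measure G) (a : G) :
    μ.addRightStabilizer ≤ (μ.map (· + a)).addRightStabilizer := by
  intro g hg
  rw [mem_addRightStabilizer, map_add_right_map_add_right, add_comm,
    ← map_add_right_map_add_right, hg]

end MeasureTheory.Measure

open Measure

lemma isZeroOneMeasure_map_of_comp_eq {X Y : Type*} [MeasurableSpace X] [MeasurableSpace Y]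
    {μ : Measure X} {f : X → Y} (hf : Measurable f) {T₁ T₂ : X → X}
    (h₁ : f ∘ T₁ = f) (h₂ : f ∘ T₂ = f)
    (herg : ∀ s, MeasurableSet s → T₁ ⁻¹' s = s → T₂ ⁻¹' s = s → μ s = 0 ∨ μ s = 1) :
    IsZeroOneMeasure (μ.map f) where
  zero_one₀ {B} hB := by
    rw [map_apply hf hB]
    exact herg _ (hf hB) (by rw [← preimage_comp, h₁]) (by rw [← preimage_comp, h₂])

lemma AddSubgroup.mem_of_add_sub_eq_zero {Z : Type*} [AddCommGroup Z] [TopologicalSpace Z]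
    [IsTopologicalAddGroup Z] {α : Z} (hα : Dense (range fun n : ℤ ↦ n • α))
    {S : AddSubgroup (Z × Z × Z)} (hS : IsClosed (S : Set (Z × Z × Z)))
    (h₁ : ((0 : Z), α, α) ∈ S) (h₂ : (α, (0 : Z), α) ∈ S)
    {p : Z × Z × Z} (hp : p.1 + p.2.1 - p.2.2 = 0) : p ∈ S := by
  let ψ : Z × Z → Z × Z × Z := fun q ↦ (q.1, q.2, q.1 + q.2)
  have hψ : Continuous ψ := by fun_prop
  have himage : ψ '' (range (fun n : ℤ ↦ n • α) ×ˢ range (fun n : ℤ ↦ n • α)) ⊆ S := by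
    rintro _ ⟨⟨_, _⟩, ⟨⟨k, rfl⟩, ⟨n, rfl⟩⟩, rfl⟩
    convert S.add_mem (S.zsmul_mem h₂ k) (S.zsmul_mem h₁ n) using 1
    simp [ψ]
  have hp : p = ψ (p.1, p.2.1) := by
    ext <;> simp [ψ, (sub_eq_zero.1 hp).symm]
  rw [hp]
  exact closure_minimal himage hS (hψ.range_subset_closure_image_dense (hα.prod hα) ⟨_, rfl⟩)

theorem ergodic_joining_is_translate_of_haar_general
    {Z : Type*} [TopologicalSpace Z] [CompactSpace Z]
    [TopologicalSpace.MetrizableSpace Z]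
    [AddCommGroup Z] [IsTopologicalAddGroup Z]
    [MeasurableSpace Z] [BorelSpace Z]
    -- `α` generates a dense subgroup of `Z`
    (α : Z) (hdense : Dense {z : Z | ∃ n : ℤ, n • α = z})
    (m : Measure (Z × Z × Z)) [IsProbabilityMeasure m]
    (hinv1 : Measure.map (fun p : Z × Z × Z => (p.1, p.2.1 + α, p.2.2 + α)) m = m)
    (hinv2 : Measure.map (fun p : Z × Z × Z => (p.1 + α, p.2.1, p.2.2 + α)) m = m)
    (herg : ∀ s : Set (Z × Z × Z), MeasurableSet s →
      (fun p : Z × Z × Z => (p.1, p.2.1 + α, p.2.2 + α)) ⁻¹' s = s →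
      (fun p : Z × Z × Z => (p.1 + α, p.2.1, p.2.2 + α)) ⁻¹' s = s →
      m s = 0 ∨ m s = 1) :
    -- `m` is the translate by `(c, 0, 0)` of the Haar probability measure of
    -- the closed subgroup `H = {(z₁,z₂,z₃) : z₁ + z₂ - z₃ = 0}`
    ∃ c : Z, ∃ mH : Measure (Z × Z × Z), IsProbabilityMeasure mH ∧
      mH {p : Z × Z × Z | p.1 + p.2.1 - p.2.2 = 0}ᶜ = 0 ∧
      (∀ h : Z × Z × Z, h.1 + h.2.1 - h.2.2 = 0 →
        Measure.map (· + h) mH = mH) ∧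
      m = Measure.map (· + ((c, 0, 0) : Z × Z × Z)) mH := by
  have : StandardBorelSpace Z := by
    let := TopologicalSpace.metrizableSpaceMetric Z
    infer_instance
  let φ : Z × Z × Z → Z := fun p ↦ p.1 + p.2.1 - p.2.2
  have hφ : Measurable φ := by fun_prop
  have := isProbabilityMeasure_map (μ := m) hφ.aemeasurable
  have : IsZeroOneMeasure (m.map φ) :=
    isZeroOneMeasure_map_of_comp_eq hφ (by ext; simp [φ]; abel) (by ext; simp [φ]; abel) herg
  obtain ⟨c, hc⟩ := IsZeroOneMeasure.exists_eq_dirac (μ := m.map φ)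
  have hH (h : Z × Z × Z) (hh : h.1 + h.2.1 - h.2.2 = 0) : h ∈ m.addRightStabilizer :=
    AddSubgroup.mem_of_add_sub_eq_zero hdense (isClosed_addRightStabilizer m)
      (by rw [mem_addRightStabilizer]; convert hinv1 using 2; ext <;> simp)
      (by rw [mem_addRightStabilizer]; convert hinv2 using 2; ext <;> simp) hh
  refine ⟨c, m.map (· + (-c, 0, 0)), isProbabilityMeasure_map (by fun_prop), ?_,
    fun h hh ↦ addRightStabilizer_le_addRightStabilizer_map m _ (hH h hh), ?_⟩
  · have hpre :
        (· + ((-c, 0, 0) : Z × Z × Z)) ⁻¹' {p | p.1 + p.2.1 - p.2.2 = 0}ᶜ = φ ⁻¹' {c}ᶜ := by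
      ext p
      simp only [mem_preimage, mem_compl_iff, mem_ofPred_eq, mem_singleton_iff, φ]
      rw [not_iff_not, ← sub_eq_zero (b := c)]
      simp only [Prod.fst_add, Prod.snd_add, add_zero]
      abel_nf
    rw [map_apply (by fun_prop) (measurableSet_eq_fun (by fun_prop) (by fun_prop)).compl, hpre,
      ← map_apply hφ (measurableSet_singleton c).compl, hc]
    simp
  · rw [map_add_right_map_add_right, show ((-c, 0, 0) : Z × Z × Z) + (c, 0, 0) = 0 by simp]
    simp

theorem ergodic_joining_is_translate_of_haar
    {Z : Type*} [TopologicalSpace Z] [CompactSpace Z]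
    [TopologicalSpace.MetrizableSpace Z]
    [AddCommGroup Z] [IsTopologicalAddGroup Z]
    [MeasurableSpace Z] [BorelSpace Z]
    -- the Haar probability measure on `Z`
    (θ : Measure Z) [IsProbabilityMeasure θ]
    (hθ : ∀ z : Z, Measure.map (· + z) θ = θ)
    -- `α` generates a dense subgroup of `Z`
    (α : Z) (hdense : Dense {z : Z | ∃ n : ℤ, n • α = z})
    (m : Measure (Z × Z × Z)) [IsProbabilityMeasure m]
    (hinv1 : Measure.map (fun p : Z × Z × Z => (p.1, p.2.1 + α, p.2.2 + α)) m = m)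
    (hinv2 : Measure.map (fun p : Z × Z × Z => (p.1 + α, p.2.1, p.2.2 + α)) m = m)
    (herg : ∀ s : Set (Z × Z × Z), MeasurableSet s →
      (fun p : Z × Z × Z => (p.1, p.2.1 + α, p.2.2 + α)) ⁻¹' s = s →
      (fun p : Z × Z × Z => (p.1 + α, p.2.1, p.2.2 + α)) ⁻¹' s = s →
      m s = 0 ∨ m s = 1) :
    -- `m` is the translate by `(c, 0, 0)` of the Haar probability measure of
    -- the closed subgroup `H = {(z₁,z₂,z₃) : z₁ + z₂ - z₃ = 0}`
    ∃ c : Z, ∃ mH : Measure (Z × Z × Z), IsProbabilityMeasure mH ∧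
      mH {p : Z × Z × Z | p.1 + p.2.1 - p.2.2 = 0}ᶜ = 0 ∧
      (∀ h : Z × Z × Z, h.1 + h.2.1 - h.2.2 = 0 →
        Measure.map (· + h) mH = mH) ∧
      m = Measure.map (· + ((c, 0, 0) : Z × Z × Z)) mH :=
  ergodic_joining_is_translate_of_haar_general α hdense m hinv1 hinv2 herg
end
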